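/- Fix M ∈ ℂ^{n×n} and ε > 0, and let M' = M ⊕ εN ⊕ εN ∈ ℂ^{(n+4)×(n+4)} where N = [[0,2],[0,0]]. For θ ∈ [0,2π) write w_j(θ) = w_j(H(e^{−iθ} M')) for j = 1,2,3. Then sup_{θ ∈ [0,2π)} w₁(θ)/w₃(θ) ≤ ‖M'‖/ε, where ‖·‖ is the operator norm. (In particular w₃(θ) ≥ 2ε > 0 for every θ.) -/

import Mathlib

open MeasureTheory Matrix Filter
open scoped Pointwise

noncomputable section

/-- Operator (spectral) norm of a square complex matrix. -/
def opNorm {m : ℕ} (M : Matrix (Fin m) (Fin m) ℂ) : ℝ :=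
  ‖Matrix.toEuclideanCLM (𝕜 := ℂ) M‖

/-- Block-diagonal direct sum of square matrices. -/
def dsum {a b : ℕ} (A : Matrix (Fin a) (Fin a) ℂ) (B : Matrix (Fin b) (Fin b) ℂ) :
    Matrix (Fin (a + b)) (Fin (a + b)) ℂ :=
  Matrix.reindex finSumFinEquiv finSumFinEquiv (Matrix.fromBlocks A 0 0 B)

/-- The nilpotent matrix `N = [[0,2],[0,0]]`. -/
def Nmat : Matrix (Fin 2) (Fin 2) ℂ := !![0, 2; 0, 0]

/-- The regularization `M' = M ⊕ εN ⊕ εN`. -/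
def Mprime {n : ℕ} (M : Matrix (Fin n) (Fin n) ℂ) (ε : ℝ) :
    Matrix (Fin (n + 4)) (Fin (n + 4)) ℂ :=
  Matrix.reindex (finCongr (by omega)) (finCongr (by omega))
    (dsum (dsum M ((ε : ℂ) • Nmat)) ((ε : ℂ) • Nmat))

/-- Hermitian part `H(B) = (B + B*)/2`. -/
def hermPart {m : ℕ} (B : Matrix (Fin m) (Fin m) ℂ) : Matrix (Fin m) (Fin m) ℂ :=
  (1 / 2 : ℂ) • (B + Bᴴ)

lemma hermPart_isHermitian {m : ℕ} (B : Matrix (Fin m) (Fin m) ℂ) :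
    (hermPart B).IsHermitian := by
  unfold hermPart
  rw [Matrix.IsHermitian, Matrix.conjTranspose_smul, Matrix.conjTranspose_add,
    Matrix.conjTranspose_conjTranspose]
  rw [add_comm]
  norm_num

/-- `k`-th largest eigenvalue (1-indexed) of the Hermitian part of a square complex
matrix; junk value `0` out of range. -/
def lamDesc {m : ℕ} (B : Matrix (Fin m) (Fin m) ℂ) (k : ℕ) : ℝ :=
  if h : 1 ≤ k ∧ k ≤ m then
    (((hermPart_isHermitian B).eigenvalues ∘
        Tuple.sort (hermPart_isHermitian B).eigenvalues) ⟨m - k, by omega⟩)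
  else 0

/-- `w₁(H(B)) = λ₁ − λ_m` for the Hermitian part of `B`. -/
def w1 {m : ℕ} (B : Matrix (Fin m) (Fin m) ℂ) : ℝ := lamDesc B 1 - lamDesc B m

/-- `w₂(H(B)) = ((λ₂ − λ_m)⁻¹ + (λ₁ − λ_{m−1})⁻¹)⁻¹` for the Hermitian part of `B`. -/
def w2 {m : ℕ} (B : Matrix (Fin m) (Fin m) ℂ) : ℝ :=
  ((lamDesc B 2 - lamDesc B m)⁻¹ + (lamDesc B 1 - lamDesc B (m - 1))⁻¹)⁻¹

/-- `w₃(H(B)) = λ₂ − λ_{m−1}` for the Hermitian part of `B`. -/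
def w3 {m : ℕ} (B : Matrix (Fin m) (Fin m) ℂ) : ℝ := lamDesc B 2 - lamDesc B (m - 1)

end

/-! The Hermitian part of `c • M'` with `‖c‖ = 1` is block diagonal, and each of the two
`ε N` blocks contributes the Hermitian block `[[0, ε c], [ε c̄, 0]]`, whose eigenvalues are `±ε`.
Reading multiplicities off the characteristic polynomial, `ε` and `-ε` are each eigenvalues at
least twice, which forces `λ₂ ≥ ε` and `λ_{m-1} ≤ -ε`, i.e. `w₃ ≥ 2ε`. On the other hand every
eigenvalue of `H(B)` is bounded in absolute value by `‖H(B)‖ ≤ ‖B‖ = ‖M'‖`, so `w₁ ≤ 2‖M'‖`. -/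

open Finset Polynomial
open scoped Matrix.Norms.L2Operator

section Sorting

variable {α : Type*} [LinearOrder α] {m : ℕ} (f : Fin m → α)

lemma card_filter_comp_sort (p : α → Prop) [DecidablePred p] :
    #{j | p (f (Tuple.sort f j))} = #{i | p (f i)} :=
  Finset.card_equiv (Tuple.sort f) (by simp)

lemma le_sort_apply_of_le_card {μ : α} {k : ℕ} (hk : k ≤ #{i | μ ≤ f i}) {j : Fin m}
    (hj : m - k ≤ j) : μ ≤ f (Tuple.sort f j) := by
  by_contra! hlt
  have hsub : ({j' | μ ≤ f (Tuple.sort f j')} : Finset (Fin m)) ⊆ Ioi j := by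
    intro j' hj'
    rw [mem_filter_univ] at hj'
    rw [mem_Ioi]
    by_contra! hle
    exact (hj'.trans (Tuple.monotone_sort f hle)).not_gt hlt
  have := card_le_card hsub
  rw [card_filter_comp_sort f (μ ≤ ·), Fin.card_Ioi] at this
  omega

lemma sort_apply_le_of_lt_card {μ : α} {j : Fin m} (hj : (j : ℕ) < #{i | f i ≤ μ}) :
    f (Tuple.sort f j) ≤ μ := by
  by_contra! hlt
  have hsub : ({j' | f (Tuple.sort f j') ≤ μ} : Finset (Fin m)) ⊆ Iio j := by
    intro j' hj'
    rw [mem_filter_univ] at hj'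
    rw [mem_Iio]
    by_contra! hle
    exact ((Tuple.monotone_sort f hle).trans hj').not_gt hlt
  have := card_le_card hsub
  rw [card_filter_comp_sort f (· ≤ μ), Fin.card_Iio] at this
  omega

end Sorting

namespace Matrix.IsHermitian

variable {𝕜 ι : Type*} [RCLike 𝕜] [Fintype ι] [DecidableEq ι] {A : Matrix ι ι 𝕜}

lemma le_card_eigenvalues_eq_of_dvd_charpoly (hA : A.IsHermitian) {μ : ℝ} {t : ℕ}
    (h : (X - C (μ : 𝕜)) ^ t ∣ A.charpoly) : t ≤ #{i | hA.eigenvalues i = μ} := by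
  have := (le_rootMultiplicity_iff A.charpoly_monic.ne_zero).2 h
  rw [← count_roots, hA.roots_charpoly_eq_eigenvalues, Multiset.count_map] at this
  convert this using 2
  simp only [Function.comp_apply, RCLike.ofReal_inj, eq_comm]
  rfl

lemma abs_eigenvalues_le_norm (hA : A.IsHermitian) (i : ι) : |hA.eigenvalues i| ≤ ‖A‖ := by
  have hv : ‖hA.eigenvectorBasis i‖ = 1 := hA.eigenvectorBasis.orthonormal.1 i
  have := A.l2_opNorm_mulVec (hA.eigenvectorBasis i)
  rw [hA.mulVec_eigenvectorBasis, hv, mul_one] at this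
  simpa [norm_smul, hv] using this

end Matrix.IsHermitian

section BlockDiagonal

lemma smul_reindex {ι κ : Type*} (c : ℂ) (e : ι ≃ κ) (A : Matrix ι ι ℂ) :
    c • reindex e e A = reindex e e (c • A) :=
  rfl

variable {a b : ℕ}

lemma smul_dsum (c : ℂ) (A : Matrix (Fin a) (Fin a) ℂ) (B : Matrix (Fin b) (Fin b) ℂ) :
    c • dsum A B = dsum (c • A) (c • B) := by
  simp only [dsum, smul_reindex, fromBlocks_smul, smul_zero]

lemma hermPart_reindex (e : Fin a ≃ Fin b) (A : Matrix (Fin a) (Fin a) ℂ) :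
    hermPart (reindex e e A) = reindex e e (hermPart A) :=
  rfl

lemma hermPart_dsum (A : Matrix (Fin a) (Fin a) ℂ) (B : Matrix (Fin b) (Fin b) ℂ) :
    hermPart (dsum A B) = dsum (hermPart A) (hermPart B) := by
  simp only [hermPart, dsum, conjTranspose_reindex, fromBlocks_conjTranspose, conjTranspose_zero]
  change reindex _ _ ((1 / 2 : ℂ) • (fromBlocks A 0 0 B + fromBlocks Aᴴ 0 0 Bᴴ)) = _
  rw [fromBlocks_add, fromBlocks_smul]
  simp only [add_zero, smul_zero]

lemma charpoly_dsum (A : Matrix (Fin a) (Fin a) ℂ) (B : Matrix (Fin b) (Fin b) ℂ) :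
    (dsum A B).charpoly = A.charpoly * B.charpoly := by
  rw [dsum, charpoly_reindex, charpoly_fromBlocks_zero₂₁]

end BlockDiagonal

open scoped ComplexConjugate in
lemma charpoly_hermPart_smul_Nmat (z : ℂ) :
    (hermPart (z • Nmat)).charpoly = X ^ 2 - C (Complex.normSq z : ℂ) := by
  have hH : hermPart (z • Nmat) = !![0, z; conj z, 0] := by
    ext i j
    fin_cases i <;> fin_cases j <;> simp [hermPart, Nmat] <;> ring
  rw [hH, charpoly_fin_two, Complex.normSq_eq_conj_mul_self]
  simp [trace_fin_two, det_fin_two, mul_comm, sub_eq_add_neg]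

lemma norm_hermPart_le {m : ℕ} (B : Matrix (Fin m) (Fin m) ℂ) : ‖hermPart B‖ ≤ ‖B‖ := by
  calc ‖hermPart B‖ ≤ ‖(1 / 2 : ℂ)‖ * (‖B‖ + ‖Bᴴ‖) := by
        rw [hermPart, norm_smul]; gcongr; exact norm_add_le _ _
    _ = ‖B‖ := by rw [l2_opNorm_conjTranspose]; norm_num; ring

section lamDesc

variable {m : ℕ} (B : Matrix (Fin m) (Fin m) ℂ) {μ : ℝ} {k : ℕ}

lemma le_lamDesc_of_le_card (hk0 : 1 ≤ k)
    (hk : k ≤ #{i | μ ≤ (hermPart_isHermitian B).eigenvalues i}) : μ ≤ lamDesc B k := by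
  have hkm : k ≤ m := hk.trans ((card_filter_le _ _).trans (card_fin m).le)
  rw [lamDesc, dif_pos ⟨hk0, hkm⟩]
  exact le_sort_apply_of_le_card _ hk le_rfl

lemma lamDesc_le_of_lt_card (hk0 : 1 ≤ k) (hkm : k ≤ m)
    (hk : m - k < #{i | (hermPart_isHermitian B).eigenvalues i ≤ μ}) : lamDesc B k ≤ μ := by
  rw [lamDesc, dif_pos ⟨hk0, hkm⟩]
  exact sort_apply_le_of_lt_card _ hk

lemma abs_lamDesc_le_norm (k : ℕ) : |lamDesc B k| ≤ ‖B‖ := by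
  unfold lamDesc
  split_ifs
  · exact ((hermPart_isHermitian B).abs_eigenvalues_le_norm _).trans (norm_hermPart_le B)
  · simp

lemma w1_le_two_mul_norm : w1 B ≤ 2 * ‖B‖ := by
  have h1 := abs_le.1 (abs_lamDesc_le_norm B 1)
  have hm := abs_le.1 (abs_lamDesc_le_norm B m)
  rw [w1]
  linarith [h1.2, hm.1]

end lamDesc

section Mprime

variable {n : ℕ} (M : Matrix (Fin n) (Fin n) ℂ) (ε : ℝ) {c : ℂ}

lemma charpoly_hermPart_smul_Mprime (hc : ‖c‖ = 1) :
    (hermPart (c • Mprime M ε)).charpoly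
      = (hermPart (c • M)).charpoly * ((X - C (ε : ℂ)) * (X + C (ε : ℂ))) ^ 2 := by
  have hN : (hermPart (c • (ε : ℂ) • Nmat)).charpoly = (X - C (ε : ℂ)) * (X + C (ε : ℂ)) := by
    rw [smul_smul, charpoly_hermPart_smul_Nmat, Complex.normSq_mul, Complex.normSq_eq_norm_sq,
      hc, Complex.normSq_ofReal]
    simp only [one_pow, one_mul, Complex.ofReal_mul, C_mul]
    ring
  rw [Mprime, smul_reindex, hermPart_reindex, charpoly_reindex, smul_dsum, hermPart_dsum,
    charpoly_dsum, smul_dsum, hermPart_dsum, charpoly_dsum, hN]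
  ring

lemma two_le_card_eigenvalues_hermPart_smul_Mprime (hc : ‖c‖ = 1) :
    2 ≤ #{i | (hermPart_isHermitian (c • Mprime M ε)).eigenvalues i = ε} ∧
      2 ≤ #{i | (hermPart_isHermitian (c • Mprime M ε)).eigenvalues i = -ε} := by
  constructor <;> apply Matrix.IsHermitian.le_card_eigenvalues_eq_of_dvd_charpoly <;>
    rw [charpoly_hermPart_smul_Mprime M ε hc, mul_pow]
  · exact (dvd_mul_right _ _).mul_left _
  · simp only [map_neg, sub_neg_eq_add]
    exact (dvd_mul_left _ _).mul_left _

lemma two_mul_le_w3_smul_Mprime (hc : ‖c‖ = 1) : 2 * ε ≤ w3 (c • Mprime M ε) := by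
  obtain ⟨hpos, hneg⟩ := two_le_card_eigenvalues_hermPart_smul_Mprime M ε hc
  have h2 : ε ≤ lamDesc (c • Mprime M ε) 2 :=
    le_lamDesc_of_le_card _ one_le_two
      (hpos.trans (card_le_card (monotone_filter_right univ fun _ _ ↦ Eq.ge)))
  have h3 : lamDesc (c • Mprime M ε) (n + 4 - 1) ≤ -ε :=
    lamDesc_le_of_lt_card _ (by omega) (by omega)
      ((show n + 4 - (n + 4 - 1) < 2 by omega).trans_le
        (hneg.trans (card_le_card (monotone_filter_right univ fun _ _ ↦ Eq.le))))
  rw [w3]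
  linarith

end Mprime

/-- control of the `L^∞` factor: for `M' = M ⊕ εN ⊕ εN`,
`sup_θ w₁(θ)/w₃(θ) ≤ ‖M'‖/ε`, and in particular `w₃(θ) ≥ 2ε` for every `θ`,
where `w_j(θ) = w_j(H(e^{−iθ}M'))`. -/
theorem stmt6 (n : ℕ) (M : Matrix (Fin n) (Fin n) ℂ) (ε : ℝ) (hε : 0 < ε) :
    (∀ θ ∈ Set.Ico (0 : ℝ) (2 * Real.pi),
      2 * ε ≤ w3 (Complex.exp (-(θ : ℂ) * Complex.I) • Mprime M ε)) ∧
    (∀ θ ∈ Set.Ico (0 : ℝ) (2 * Real.pi),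
      w1 (Complex.exp (-(θ : ℂ) * Complex.I) • Mprime M ε) /
          w3 (Complex.exp (-(θ : ℂ) * Complex.I) • Mprime M ε) ≤
        opNorm (Mprime M ε) / ε) := by
  have hc (θ : ℝ) : ‖Complex.exp (-(θ : ℂ) * Complex.I)‖ = 1 := by
    rw [Complex.norm_exp]; simp
  refine ⟨fun θ _ ↦ two_mul_le_w3_smul_Mprime M ε (hc θ), fun θ _ ↦ ?_⟩
  set B := Complex.exp (-(θ : ℂ) * Complex.I) • Mprime M ε
  have hw3 : 2 * ε ≤ w3 B := two_mul_le_w3_smul_Mprime M ε (hc θ)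
  have hw1 : w1 B ≤ 2 * ‖Mprime M ε‖ := by
    simpa only [B, norm_smul, hc, one_mul] using w1_le_two_mul_norm B
  calc w1 B / w3 B ≤ 2 * ‖Mprime M ε‖ / w3 B := by gcongr; linarith
    _ ≤ 2 * ‖Mprime M ε‖ / (2 * ε) := by gcongr
    _ = opNorm (Mprime M ε) / ε := mul_div_mul_left _ _ two_ne_zero
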